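/- For every integer n ≥ 2 and every k ≥ 1: given x₁ < x₂ < ⋯ < x_k and y₁ < y₂ < ⋯ < y_k all lying in Δ_n, there exists f ∈ BPL_n(ℝ) with f(xᵢ) = yᵢ for all 1 ≤ i ≤ k. (That is, BPL_n(ℝ) acts order k-transitively on Δ_n for every k.) -/

import Mathlib

noncomputable section

/-- `ℤ[1/n]` realized as a subset of `ℝ`: all reals of the form `a * n^b` with `a b : ℤ`. -/
def zpows (n : ℕ) : Set ℝ := {x : ℝ | ∃ a b : ℤ, x = (a : ℝ) * (n : ℝ) ^ b}

/-- The defining properties of the (unique) ring homomorphism `φₙ : ℤ[1/n] → ℤ/(n-1)ℤ`,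
expressed for a function `φ : ℝ → ZMod (n-1)` restricted to the subset `zpows n`. -/
def IsPhi (n : ℕ) (φ : ℝ → ZMod (n - 1)) : Prop :=
  (∀ x ∈ zpows n, ∀ y ∈ zpows n, φ (x + y) = φ x + φ y) ∧
  (∀ x ∈ zpows n, ∀ y ∈ zpows n, φ (x * y) = φ x * φ y) ∧
  φ 1 = 1

/-- `B` is a discrete subset of `ℝ`: every point of `ℝ` has a neighborhood containing
at most one point of `B`. -/
def LocDiscrete (B : Set ℝ) : Prop := ∀ x : ℝ, ∃ ε > 0, ∀ y ∈ B, |y - x| < ε → y = x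

/-- Membership in `PLₙ(ℝ)`: an orientation-preserving homeomorphism of `ℝ`
(equivalently, a strictly monotone surjection), piecewise linear with breaks in a
discrete subset of `ℤ[1/n]`, all slopes integral powers of `n`, and mapping `ℤ[1/n]`
into itself. -/
def MemPL (n : ℕ) (f : ℝ → ℝ) : Prop :=
  StrictMono f ∧ Function.Surjective f ∧
  (∃ B : Set ℝ, B ⊆ zpows n ∧ LocDiscrete B ∧
    ∀ x ∉ B, ∃ (k : ℤ) (c : ℝ), ∃ ε > 0, ∀ y : ℝ, |y - x| < ε → f y = (n : ℝ) ^ k * y + c) ∧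
  (∀ q ∈ zpows n, f q ∈ zpows n)

/-- Membership in `BPLₙ(ℝ)`: elements of `PLₙ(ℝ)` with bounded support. -/
def MemBPL (n : ℕ) (f : ℝ → ℝ) : Prop :=
  MemPL n f ∧ ∃ M : ℝ, ∀ x : ℝ, M < |x| → f x = x

/-!
List the pairs `(xᵢ, yᵢ)` in increasing order, framed by `(-N, -N)` and `(N, N)`. For
consecutive points `P, Q` of this list, both increments `Q.1 - P.1` and `Q.2 - P.2` are positive
elements of `ℤ[1/n]` with the same `φ`-value. Over a common denominator `n ^ b` their numerators
are therefore congruent mod `n - 1`, and since splitting `n ^ e` into `n` copies of `n ^ (e - 1)`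
adds `n - 1` summands, both increments are sums of the same number of integral powers of `n`.
Pairing these summands refines the list to a staircase whose steps advance both coordinates by
powers of `n`. The piecewise linear interpolant through the staircase then has slopes
`n ^ (q - p)`, breaks at the staircase points (which lie in `ℤ[1/n]`), and is the identity
outside `[-N, N]`.
-/

open Filter Topology Relation

variable {n : ℕ}

theorem mem_zpows_iff (hn : 0 < n) {x : ℝ} :
    x ∈ zpows n ↔ ∃ b : ℕ, ∃ a : ℤ, (n : ℝ) ^ b * x = a := by
  have hn' : (n : ℝ) ≠ 0 := by positivity
  constructor
  · rintro ⟨a, e, rfl⟩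
    refine ⟨e.natAbs, a * n ^ (e.natAbs + e).toNat, ?_⟩
    rw [Int.cast_mul, Int.cast_pow, Int.cast_natCast, ← zpow_natCast, ← zpow_natCast,
      Int.toNat_of_nonneg (by omega), zpow_add₀ hn', zpow_natCast]
    ring
  · rintro ⟨b, a, h⟩
    exact ⟨a, -b, by rw [← h, zpow_neg, zpow_natCast]; field_simp⟩

def zpowsSubring (hn : 0 < n) : Subring ℝ where
  carrier := zpows n
  mul_mem' {x y} hx hy := by
    obtain ⟨b, a, hx⟩ := (mem_zpows_iff hn).1 hx
    obtain ⟨b', a', hy⟩ := (mem_zpows_iff hn).1 hy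
    exact (mem_zpows_iff hn).2 ⟨b + b', a * a', by push_cast; rw [← hx, ← hy]; ring⟩
  one_mem' := ⟨1, 0, by simp⟩
  add_mem' {x y} hx hy := by
    obtain ⟨b, a, hx⟩ := (mem_zpows_iff hn).1 hx
    obtain ⟨b', a', hy⟩ := (mem_zpows_iff hn).1 hy
    exact (mem_zpows_iff hn).2
      ⟨b + b', n ^ b' * a + n ^ b * a', by push_cast; rw [← hx, ← hy]; ring⟩
  zero_mem' := ⟨0, 0, by simp⟩
  neg_mem' {x} hx := by
    obtain ⟨a, b, rfl⟩ := hx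
    exact ⟨-a, b, by push_cast; ring⟩

theorem zpow_mem_zpows (k : ℤ) : (n : ℝ) ^ k ∈ zpows n := ⟨1, k, by simp⟩

theorem natCast_mem_zpows (a : ℕ) : (a : ℝ) ∈ zpows n := ⟨a, 0, by simp⟩

theorem exists_pow_mul_eq_natCast (hn : 0 < n) {u : ℝ} (hu : u ∈ zpows n) (hu0 : 0 < u) :
    ∃ b a : ℕ, 0 < a ∧ (n : ℝ) ^ b * u = a := by
  obtain ⟨b, a, h⟩ := (mem_zpows_iff hn).1 hu
  have ha : 0 < a := by exact_mod_cast h ▸ mul_pos (by positivity) hu0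
  refine ⟨b, a.toNat, by omega, ?_⟩
  rw [h, ← Int.toNat_of_nonneg ha.le, Int.cast_natCast, Int.toNat_natCast]

namespace IsPhi

variable {φ : ℝ → ZMod (n - 1)} (hφ : IsPhi n φ)
include hφ

theorem map_zero : φ 0 = 0 := by
  have h0 : (0 : ℝ) ∈ zpows n := ⟨0, 0, by simp⟩
  simpa using hφ.1 0 h0 0 h0

theorem map_natCast (a : ℕ) : φ a = a := by
  induction a with
  | zero => simpa using hφ.map_zero
  | succ a ih =>
    rw [Nat.cast_succ, hφ.1 _ (natCast_mem_zpows a) _ ⟨1, 0, by simp⟩, ih, hφ.2.2,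
      Nat.cast_succ]

theorem map_sub (hn : 0 < n) {x y : ℝ} (hx : x ∈ zpows n) (hy : y ∈ zpows n) :
    φ (x - y) = φ x - φ y :=
  eq_sub_of_add_eq (by simpa using (hφ.1 _ ((zpowsSubring hn).sub_mem hx hy) _ hy).symm)

/-- Since `n ≡ 1 mod n - 1`, `φ` only sees the numerator. -/
theorem natCast_eq_of_pow_mul_eq (hn : 0 < n) {x : ℝ} (hx : x ∈ zpows n) {a b : ℕ}
    (h : (n : ℝ) ^ b * x = a) : (a : ZMod (n - 1)) = φ x := by
  have hn1 : (n : ZMod (n - 1)) = 1 := by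
    obtain ⟨m, rfl⟩ : ∃ m, n = m + 1 := ⟨n - 1, by omega⟩
    simp
  rw [← hφ.map_natCast, ← h, ← Nat.cast_pow, hφ.2.1 _ (natCast_mem_zpows _) _ hx,
    hφ.map_natCast, Nat.cast_pow, hn1, one_pow, one_mul]

end IsPhi

def IsNPowSum (n N : ℕ) (u : ℝ) : Prop :=
  ∃ l : List ℤ, l.length = N ∧ (l.map fun e => (n : ℝ) ^ e).sum = u

theorem isNPowSum_of_pow_mul_eq (hn : 0 < n) {u : ℝ} {a b : ℕ} (h : (n : ℝ) ^ b * u = a) :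
    IsNPowSum n a u := by
  refine ⟨List.replicate a (-(b : ℤ)), List.length_replicate, ?_⟩
  rw [List.map_replicate, List.sum_replicate, nsmul_eq_mul, ← h, zpow_neg, zpow_natCast]
  field_simp

theorem IsNPowSum.add_sub_one (hn : 0 < n) {N : ℕ} {u : ℝ} (h : IsNPowSum n N u) (hN : 0 < N) :
    IsNPowSum n (N + (n - 1)) u := by
  obtain ⟨l, hlen, hsum⟩ := h
  obtain ⟨e, l, rfl⟩ := List.exists_cons_of_length_eq_add_one (l := l) (n := N - 1) (by omega)
  refine ⟨List.replicate n (e - 1) ++ l, ?_, ?_⟩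
  · simp only [List.length_append, List.length_replicate, List.length_cons] at hlen ⊢
    omega
  · have hsplit : (n : ℝ) ^ e = n • (n : ℝ) ^ (e - 1) := by
      rw [nsmul_eq_mul, ← zpow_one_add₀ (by positivity), add_sub_cancel]
    rw [← hsum, List.map_append, List.sum_append, List.map_replicate, List.sum_replicate,
      List.map_cons, List.sum_cons, hsplit]

theorem IsNPowSum.add_mul_sub_one (hn : 0 < n) {N : ℕ} {u : ℝ} (h : IsNPowSum n N u)
    (hN : 0 < N) (t : ℕ) : IsNPowSum n (N + t * (n - 1)) u := by
  induction t with
  | zero => simpa using h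
  | succ t ih => simpa [add_mul, add_assoc] using ih.add_sub_one hn (by omega)

theorem isNPowSum_of_modEq (hn : 0 < n) {u : ℝ} {a b N : ℕ} (h : (n : ℝ) ^ b * u = a)
    (ha : 0 < a) (haN : a ≤ N) (hmod : a ≡ N [MOD n - 1]) : IsNPowSum n N u := by
  obtain ⟨t, ht⟩ := (Nat.modEq_iff_dvd' haN).1 hmod
  simpa [show N = a + t * (n - 1) by rw [mul_comm, ← ht]; omega] using
    (isNPowSum_of_pow_mul_eq hn h).add_mul_sub_one hn ha t

def IsNStep (n : ℕ) (P Q : ℝ × ℝ) : Prop :=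
  (∃ p : ℤ, Q.1 - P.1 = (n : ℝ) ^ p) ∧ ∃ q : ℤ, Q.2 - P.2 = (n : ℝ) ^ q

theorem IsNStep.lt (hn : 0 < n) {P Q : ℝ × ℝ} (h : IsNStep n P Q) :
    P.1 < Q.1 ∧ P.2 < Q.2 := by
  obtain ⟨⟨p, hp⟩, q, hq⟩ := h
  constructor <;> [rw [← sub_pos, hp]; rw [← sub_pos, hq]] <;> positivity

theorem reflTransGen_isNStep_of_isNPowSum {N : ℕ} {u v : ℝ} (hu : IsNPowSum n N u)
    (hv : IsNPowSum n N v) (P : ℝ × ℝ) : ReflTransGen (IsNStep n) P (P.1 + u, P.2 + v) := by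
  obtain ⟨l, rfl, rfl⟩ := hu
  obtain ⟨l', hl', rfl⟩ := hv
  induction l generalizing l' P with
  | nil =>
    obtain rfl : l' = [] := List.length_eq_zero_iff.1 hl'
    simpa using ReflTransGen.refl
  | cons e l ih =>
    obtain ⟨e', l', rfl⟩ := List.exists_cons_of_length_eq_add_one hl'
    refine ReflTransGen.head (b := (P.1 + n ^ e, P.2 + n ^ e'))
      ⟨⟨e, by simp⟩, e', by simp⟩ ?_
    simpa [add_assoc] using ih (P.1 + n ^ e, P.2 + n ^ e') l' (by simpa using hl')

theorem reflTransGen_isNStep_of_phi_eq (hn : 0 < n) {φ : ℝ → ZMod (n - 1)} (hφ : IsPhi n φ)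
    {P Q : ℝ × ℝ} (hP : P.1 ∈ zpows n ∧ P.2 ∈ zpows n ∧ φ P.1 = φ P.2)
    (hQ : Q.1 ∈ zpows n ∧ Q.2 ∈ zpows n ∧ φ Q.1 = φ Q.2) (hPQ : P.1 < Q.1 ∧ P.2 < Q.2) :
    ReflTransGen (IsNStep n) P Q := by
  have hu : Q.1 - P.1 ∈ zpows n := (zpowsSubring hn).sub_mem hQ.1 hP.1
  have hv : Q.2 - P.2 ∈ zpows n := (zpowsSubring hn).sub_mem hQ.2.1 hP.2.1
  obtain ⟨b, a, ha, hua⟩ := exists_pow_mul_eq_natCast hn hu (sub_pos.2 hPQ.1)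
  obtain ⟨b', a', ha', hva⟩ := exists_pow_mul_eq_natCast hn hv (sub_pos.2 hPQ.2)
  set A := n ^ b' * a
  set A' := n ^ b * a'
  have hua' : (n : ℝ) ^ (b + b') * (Q.1 - P.1) = A := by push_cast [A]; rw [← hua]; ring
  have hva' : (n : ℝ) ^ (b + b') * (Q.2 - P.2) = A' := by push_cast [A']; rw [← hva]; ring
  have hmod : A ≡ A' [MOD n - 1] := by
    rw [← ZMod.natCast_eq_natCast_iff, hφ.natCast_eq_of_pow_mul_eq hn hu hua',
      hφ.natCast_eq_of_pow_mul_eq hn hv hva', hφ.map_sub hn hQ.1 hP.1,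
      hφ.map_sub hn hQ.2.1 hP.2.1, hP.2.2, hQ.2.2]
  have hmax : A ≡ max A A' [MOD n - 1] ∧ A' ≡ max A A' [MOD n - 1] := by
    rcases le_total A A' with h | h <;> simp [h, hmod, hmod.symm, Nat.ModEq.refl]
  simpa using reflTransGen_isNStep_of_isNPowSum
    (isNPowSum_of_modEq hn hua' (by positivity) (le_max_left _ _) hmax.1)
    (isNPowSum_of_modEq hn hva' (by positivity) (le_max_right _ _) hmax.2) P

theorem mem_zpows_of_isChain (hn : 0 < n) {P : ℝ × ℝ} {l : List (ℝ × ℝ)}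
    (hl : (P :: l).IsChain (IsNStep n)) (hP : P.1 ∈ zpows n ∧ P.2 ∈ zpows n) :
    ∀ R ∈ P :: l, R.1 ∈ zpows n ∧ R.2 ∈ zpows n := by
  refine hl.induction _ _ (fun R S ⟨⟨p, hp⟩, q, hq⟩ ⟨h1, h2⟩ => ⟨?_, ?_⟩)
    fun _ => hP
  · rw [← sub_add_cancel S.1 R.1, hp]; exact (zpowsSubring hn).add_mem (zpow_mem_zpows p) h1
  · rw [← sub_add_cancel S.2 R.2, hq]; exact (zpowsSubring hn).add_mem (zpow_mem_zpows q) h2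

def lineThrough (P : ℝ × ℝ) (s t : ℝ) : ℝ := P.2 + s * (t - P.1)

def slopeBetween (P Q : ℝ × ℝ) : ℝ := (Q.2 - P.2) / (Q.1 - P.1)

/-- The piecewise linear map through the points of `l` (listed with increasing abscissae),
extended affinely to the left of the first point and by a translation to the right of the last. -/
def interpolant : List (ℝ × ℝ) → ℝ → ℝ
  | [] => id
  | [P] => lineThrough P 1
  | P :: Q :: l => fun t =>
    if t < Q.1 then lineThrough P (slopeBetween P Q) t else interpolant (Q :: l) t

@[simp] theorem lineThrough_fst (P : ℝ × ℝ) (s : ℝ) : lineThrough P s P.1 = P.2 := by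
  simp [lineThrough]

theorem lineThrough_slopeBetween {P Q : ℝ × ℝ} (h : P.1 ≠ Q.1) :
    lineThrough P (slopeBetween P Q) Q.1 = Q.2 := by
  rw [lineThrough, slopeBetween, div_mul_cancel₀ _ (sub_ne_zero.2 h.symm)]
  ring

theorem slopeBetween_pos {P Q : ℝ × ℝ} (h : P.1 < Q.1 ∧ P.2 < Q.2) : 0 < slopeBetween P Q :=
  div_pos (sub_pos.2 h.2) (sub_pos.2 h.1)

theorem IsNStep.slopeBetween_eq (hn : 0 < n) {P Q : ℝ × ℝ} (h : IsNStep n P Q) :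
    ∃ k : ℤ, slopeBetween P Q = (n : ℝ) ^ k := by
  obtain ⟨⟨p, hp⟩, q, hq⟩ := h
  exact ⟨q - p, by rw [slopeBetween, hp, hq, zpow_sub₀ (by positivity)]⟩

theorem strictMono_lineThrough (P : ℝ × ℝ) {s : ℝ} (hs : 0 < s) :
    StrictMono (lineThrough P s) :=
  fun x y hxy => by unfold lineThrough; gcongr

theorem surjective_lineThrough (P : ℝ × ℝ) {s : ℝ} (hs : s ≠ 0) :
    Function.Surjective (lineThrough P s) :=
  fun z => ⟨P.1 + (z - P.2) / s, by rw [lineThrough]; field_simp; ring⟩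

theorem lineThrough_mem_zpows (hn : 0 < n) {P : ℝ × ℝ} {s t : ℝ}
    (hP : P.1 ∈ zpows n ∧ P.2 ∈ zpows n) (hs : s ∈ zpows n) (ht : t ∈ zpows n) :
    lineThrough P s t ∈ zpows n :=
  (zpowsSubring hn).add_mem hP.2 <|
    (zpowsSubring hn).mul_mem hs <| (zpowsSubring hn).sub_mem ht hP.1

def IsNAffineNear (n : ℕ) (f : ℝ → ℝ) (x : ℝ) : Prop :=
  ∃ (k : ℤ) (c : ℝ), f =ᶠ[𝓝 x] fun y => (n : ℝ) ^ k * y + c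

theorem isNAffineNear_lineThrough (P : ℝ × ℝ) (k : ℤ) (x : ℝ) :
    IsNAffineNear n (lineThrough P ((n : ℝ) ^ k)) x :=
  ⟨k, P.2 - n ^ k * P.1, .of_eq (by funext y; simp only [lineThrough]; ring)⟩

section Piecewise

variable {f g : ℝ → ℝ} {a : ℝ}

theorem strictMono_ite_lt (hf : StrictMono f) (hg : StrictMono g) (ha : f a = g a) :
    StrictMono fun t => if t < a then f t else g t := by
  refine StrictMonoOn.Iic_union_Ici (a := a) ((hf.strictMonoOn _).congr fun t ht => ?_)
    ((hg.strictMonoOn _).congr fun t ht => ?_)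
  · rcases (Set.mem_Iic.1 ht).lt_or_eq with h | rfl <;> simp [*]
  · simp [not_lt.2 (Set.mem_Ici.1 ht)]

theorem surjective_ite_lt (hf : StrictMono f) (hg : StrictMono g) (hf' : Function.Surjective f)
    (hg' : Function.Surjective g) (ha : f a = g a) :
    Function.Surjective fun t => if t < a then f t else g t := by
  intro z
  rcases lt_or_ge z (f a) with hz | hz
  · obtain ⟨t, rfl⟩ := hf' z
    exact ⟨t, by simp [hf.lt_iff_lt.1 hz]⟩
  · obtain ⟨t, rfl⟩ := hg' z
    exact ⟨t, by simp [hg.le_iff_le.1 (ha ▸ hz)]⟩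

theorem IsNAffineNear.ite_lt {x : ℝ} (hf : x < a → IsNAffineNear n f x)
    (hg : a < x → IsNAffineNear n g x) (hx : x ≠ a) :
    IsNAffineNear n (fun t => if t < a then f t else g t) x := by
  rcases hx.lt_or_gt with h | h
  · obtain ⟨k, c, hfk⟩ := hf h
    refine ⟨k, c, EventuallyEq.trans ?_ hfk⟩
    filter_upwards [Iio_mem_nhds h] with y hy
    simp [Set.mem_Iio.1 hy]
  · obtain ⟨k, c, hgk⟩ := hg h
    refine ⟨k, c, EventuallyEq.trans ?_ hgk⟩
    filter_upwards [Ioi_mem_nhds h] with y hy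
    simp [not_lt.2 (Set.mem_Ioi.1 hy).le]

end Piecewise

section Interpolant

variable {P Q : ℝ × ℝ} {l : List (ℝ × ℝ)}

theorem interpolant_cons_cons_of_le {t : ℝ} (ht : Q.1 ≤ t) :
    interpolant (P :: Q :: l) t = interpolant (Q :: l) t := by
  simp [interpolant, not_lt.2 ht]

theorem interpolant_cons_cons_of_lt {t : ℝ} (ht : t < Q.1) :
    interpolant (P :: Q :: l) t = lineThrough P (slopeBetween P Q) t := by
  simp [interpolant, ht]

variable (hl : (P :: l).IsChain fun P Q => P.1 < Q.1 ∧ P.2 < Q.2)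
include hl

theorem fst_le_of_mem_of_isChain {R : ℝ × ℝ} (hR : R ∈ P :: l) : P.1 ≤ R.1 :=
  hl.induction (fun R => P.1 ≤ R.1) _ (fun _ _ h h' => h'.trans h.1.le) (fun _ => le_rfl) R hR

theorem interpolant_fst : interpolant (P :: l) P.1 = P.2 := by
  cases l with
  | nil => simp [interpolant]
  | cons Q l => simp [interpolant_cons_cons_of_lt (List.isChain_cons_cons.1 hl).1.1]

theorem interpolant_of_mem : ∀ R ∈ P :: l, interpolant (P :: l) R.1 = R.2 := by
  induction l generalizing P with
  | nil => simp [interpolant]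
  | cons Q l ih =>
    intro R hR
    rcases List.mem_cons.1 hR with rfl | hR
    · exact interpolant_fst hl
    · rw [interpolant_cons_cons_of_le (fst_le_of_mem_of_isChain hl.tail hR)]
      exact ih hl.tail R hR

theorem interpolant_of_getLast_le {R : ℝ × ℝ}
    (hR : (P :: l).getLast (List.cons_ne_nil _ _) = R) {t : ℝ} (ht : R.1 ≤ t) :
    interpolant (P :: l) t = t + (R.2 - R.1) := by
  induction l generalizing P with
  | nil =>
    rw [List.getLast_singleton] at hR
    subst hR
    simp only [interpolant, lineThrough]
    ring
  | cons Q l ih =>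
    rw [List.getLast_cons_cons] at hR
    rw [interpolant_cons_cons_of_le
      ((fst_le_of_mem_of_isChain hl.tail (hR ▸ List.getLast_mem _)).trans ht)]
    exact ih hl.tail hR

theorem strictMono_interpolant : StrictMono (interpolant (P :: l)) := by
  induction l generalizing P with
  | nil => exact strictMono_lineThrough P one_pos
  | cons Q l ih =>
    have hPQ := (List.isChain_cons_cons.1 hl).1
    exact strictMono_ite_lt (strictMono_lineThrough P (slopeBetween_pos hPQ)) (ih hl.tail)
      (by rw [lineThrough_slopeBetween hPQ.1.ne, interpolant_fst hl.tail])

theorem surjective_interpolant : Function.Surjective (interpolant (P :: l)) := by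
  induction l generalizing P with
  | nil => exact surjective_lineThrough P one_ne_zero
  | cons Q l ih =>
    have hPQ := (List.isChain_cons_cons.1 hl).1
    exact surjective_ite_lt (strictMono_lineThrough P (slopeBetween_pos hPQ))
      (strictMono_interpolant hl.tail) (surjective_lineThrough P (slopeBetween_pos hPQ).ne')
      (ih hl.tail) (by rw [lineThrough_slopeBetween hPQ.1.ne, interpolant_fst hl.tail])

end Interpolant

theorem isNAffineNear_interpolant (hn : 0 < n) {P : ℝ × ℝ} {l : List (ℝ × ℝ)}
    (hl : (P :: l).IsChain (IsNStep n)) {x : ℝ} (hx : x ∉ (P :: l).map Prod.fst) :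
    IsNAffineNear n (interpolant (P :: l)) x := by
  induction l generalizing P with
  | nil => simpa [interpolant] using isNAffineNear_lineThrough (n := n) P 0 x
  | cons Q l ih =>
    obtain ⟨hPQ, hl⟩ := List.isChain_cons_cons.1 hl
    obtain ⟨k, hk⟩ := hPQ.slopeBetween_eq hn
    exact IsNAffineNear.ite_lt (fun _ => hk ▸ isNAffineNear_lineThrough P k x)
      (fun _ => ih hl fun h => hx (List.mem_cons_of_mem _ h)) fun h => hx (by simp [h])

theorem interpolant_mem_zpows (hn : 0 < n) {P : ℝ × ℝ} {l : List (ℝ × ℝ)}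
    (hl : (P :: l).IsChain (IsNStep n)) (hP : P.1 ∈ zpows n ∧ P.2 ∈ zpows n) {q : ℝ}
    (hq : q ∈ zpows n) : interpolant (P :: l) q ∈ zpows n := by
  induction l generalizing P with
  | nil => exact lineThrough_mem_zpows hn hP (zpowsSubring hn).one_mem hq
  | cons Q l ih =>
    obtain ⟨hPQ, hl⟩ := List.isChain_cons_cons.1 hl
    obtain ⟨k, hk⟩ := hPQ.slopeBetween_eq hn
    rcases lt_or_ge q Q.1 with hqQ | hqQ
    · rw [interpolant_cons_cons_of_lt hqQ]
      exact lineThrough_mem_zpows hn hP (hk ▸ zpow_mem_zpows k) hq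
    · rw [interpolant_cons_cons_of_le hqQ]
      exact ih hl (mem_zpows_of_isChain hn (.cons_cons hPQ hl) hP Q (by simp))

theorem Set.Finite.locDiscrete {B : Set ℝ} (hB : B.Finite) : LocDiscrete B := by
  intro x
  obtain ⟨ε, hε, hball⟩ :=
    Metric.isOpen_iff.1 (hB.sdiff (t := {x})).isClosed.isOpen_compl x (by simp)
  refine ⟨ε, hε, fun y hy hyx => by_contra fun hne => hball ?_ ⟨hy, hne⟩⟩
  rwa [Metric.mem_ball, Real.dist_eq]

theorem MemPL.of_isNAffineNear {f : ℝ → ℝ} (hf : StrictMono f) (hf' : Function.Surjective f)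
    {B : Set ℝ} (hBz : B ⊆ zpows n) (hB : B.Finite) (hfB : ∀ x ∉ B, IsNAffineNear n f x)
    (hfz : ∀ q ∈ zpows n, f q ∈ zpows n) : MemPL n f := by
  refine ⟨hf, hf', ⟨B, hBz, hB.locDiscrete, fun x hx => ?_⟩, hfz⟩
  obtain ⟨k, c, hk⟩ := hfB x hx
  obtain ⟨ε, hε, h⟩ := Metric.eventually_nhds_iff.1 hk
  exact ⟨k, c, ε, hε, fun y hy => h (by rwa [Real.dist_eq])⟩

theorem exists_memBPL_of_isChain (hn : 0 < n) {a b : ℝ} (ha : a ∈ zpows n)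
    {l : List (ℝ × ℝ)} (hl : ((a, a) :: l).IsChain (IsNStep n))
    (hlast : ((a, a) :: l).getLast (List.cons_ne_nil _ _) = (b, b)) :
    ∃ f, MemBPL n f ∧ ∀ P ∈ (a, a) :: l, f P.1 = P.2 := by
  -- the extra point makes the interpolant the identity to the left of `a`
  set L := (a - 1, a - 1) :: (a, a) :: l
  have hL : L.IsChain (IsNStep n) := .cons_cons ⟨⟨0, by simp⟩, 0, by simp⟩ hl
  have hLlt : L.IsChain fun P Q => P.1 < Q.1 ∧ P.2 < Q.2 := hL.imp fun _ _ h => h.lt hn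
  have ha1 : a - 1 ∈ zpows n := (zpowsSubring hn).sub_mem ha (zpowsSubring hn).one_mem
  have hLz := mem_zpows_of_isChain hn hL ⟨ha1, ha1⟩
  refine ⟨interpolant L, ⟨MemPL.of_isNAffineNear (strictMono_interpolant hLlt)
    (surjective_interpolant hLlt) (B := {x | x ∈ L.map Prod.fst}) ?_ (L.map Prod.fst).finite_toSet
    (fun x hx => isNAffineNear_interpolant hn hL hx)
    (fun q hq => interpolant_mem_zpows hn hL ⟨ha1, ha1⟩ hq), max |a| |b|, fun t ht => ?_⟩,
    fun P hP => interpolant_of_mem hLlt P (List.mem_cons_of_mem _ hP)⟩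
  · intro x hx
    obtain ⟨P, hP, rfl⟩ := List.mem_map.1 hx
    exact (hLz P hP).1
  · rcases lt_abs.1 ht with h | h
    · have hb : b ≤ t := (le_abs_self b).trans ((le_max_right _ _).trans h.le)
      rw [interpolant_of_getLast_le hLlt (R := (b, b)) (by simpa [L] using hlast) hb]
      ring
    · have ht' : t < a := by linarith [neg_abs_le a, le_max_left |a| |b|]
      rw [interpolant_cons_cons_of_lt ht']
      simp [lineThrough, slopeBetween]

theorem Relation.ReflTransGen.exists_isChain_cons_suffix {α : Type*} {r : α → α → Prop}
    {a b : α} {l : List α} (hab : ReflTransGen r a b) (hl : (b :: l).IsChain r) :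
    ∃ l', (a :: l').IsChain r ∧ b :: l <:+ a :: l' := by
  induction hab using Relation.ReflTransGen.head_induction_on with
  | refl => exact ⟨l, hl, List.suffix_refl _⟩
  | head hac _ ih =>
    obtain ⟨l', hl', hsuf⟩ := ih
    exact ⟨_ :: l', .cons_cons hac hl', hsuf.trans (List.suffix_cons _ _)⟩

theorem List.IsChain.exists_isChain_of_reflTransGen {α : Type*} {r : α → α → Prop} :
    ∀ {a : α} {cs : List α}, (a :: cs).IsChain (ReflTransGen r) →
      ∃ l, (a :: l).IsChain r ∧ a :: cs ⊆ a :: l ∧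
        (a :: l).getLast (List.cons_ne_nil _ _) = (a :: cs).getLast (List.cons_ne_nil _ _)
  | a, [], _ => ⟨[], .singleton a, List.Subset.refl _, rfl⟩
  | a, b :: cs, h => by
    obtain ⟨hab, h⟩ := List.isChain_cons_cons.1 h
    obtain ⟨l, hl, hsub, hlast⟩ := exists_isChain_of_reflTransGen h
    obtain ⟨l', hl', hsuf⟩ := hab.exists_isChain_cons_suffix hl
    refine ⟨l', hl',
      List.cons_subset.2 ⟨List.mem_cons_self, List.Subset.trans hsub hsuf.subset⟩, ?_⟩
    rw [List.getLast_cons_cons, ← hlast, hsuf.getLast]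

theorem exists_memBPL_of_pairwise (hn : 0 < n) {φ : ℝ → ZMod (n - 1)} (hφ : IsPhi n φ)
    {a b : ℝ} {cs : List (ℝ × ℝ)}
    (hgood : ∀ P ∈ (a, a) :: cs, P.1 ∈ zpows n ∧ P.2 ∈ zpows n ∧ φ P.1 = φ P.2)
    (hlt : ((a, a) :: cs).Pairwise fun P Q => P.1 < Q.1 ∧ P.2 < Q.2)
    (hlast : ((a, a) :: cs).getLast (List.cons_ne_nil _ _) = (b, b)) :
    ∃ f, MemBPL n f ∧ ∀ P ∈ (a, a) :: cs, f P.1 = P.2 := by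
  obtain ⟨l, hl, hsub, hlast'⟩ := List.IsChain.exists_isChain_of_reflTransGen
    ((List.Pairwise.and_mem.1 hlt).isChain.imp fun P Q ⟨hP, hQ, hPQ⟩ =>
      reflTransGen_isNStep_of_phi_eq hn hφ (hgood P hP) (hgood Q hQ) hPQ)
  obtain ⟨f, hf, hfl⟩ :=
    exists_memBPL_of_isChain hn (hgood _ List.mem_cons_self).1 hl (hlast'.trans hlast)
  exact ⟨f, hf, fun P hP => hfl P (hsub hP)⟩

theorem exists_memBPL_of_phi_eq (hn : 0 < n) {φ : ℝ → ZMod (n - 1)} (hφ : IsPhi n φ)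
    {k : ℕ} {x y : Fin k → ℝ} (hx : StrictMono x) (hy : StrictMono y)
    (hxz : ∀ i, x i ∈ zpows n) (hyz : ∀ i, y i ∈ zpows n)
    (hxy : ∀ i, φ (x i) = φ (y i)) :
    ∃ f, MemBPL n f ∧ ∀ i, f (x i) = y i := by
  obtain ⟨N, hN⟩ := exists_nat_gt (‖x‖ + ‖y‖)
  have hN0 : (0 : ℝ) < N := by linarith [norm_nonneg x, norm_nonneg y]
  have hxN i : -N < x i ∧ x i < N := abs_lt.1 <|
    (Real.norm_eq_abs (x i) ▸ norm_le_pi_norm x i).trans_lt (by linarith [norm_nonneg y])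
  have hyN i : -N < y i ∧ y i < N := abs_lt.1 <|
    (Real.norm_eq_abs (y i) ▸ norm_le_pi_norm y i).trans_lt (by linarith [norm_nonneg x])
  set cs := (List.ofFn fun i => (x i, y i)) ++ [((N : ℝ), (N : ℝ))]
  have hgood : ∀ P ∈ (-(N : ℝ), -(N : ℝ)) :: cs,
      P.1 ∈ zpows n ∧ P.2 ∈ zpows n ∧ φ P.1 = φ P.2 := by
    have hNz := natCast_mem_zpows (n := n) N
    have hNz' := (zpowsSubring hn).neg_mem hNz
    simp only [cs, List.mem_cons, List.mem_append, List.mem_ofFn, List.not_mem_nil, or_false]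
    rintro P (rfl | ⟨i, rfl⟩ | rfl)
    exacts [⟨hNz', hNz', rfl⟩, ⟨hxz i, hyz i, hxy i⟩, ⟨hNz, hNz, rfl⟩]
  have hlt : ((-(N : ℝ), -(N : ℝ)) :: cs).Pairwise fun P Q => P.1 < Q.1 ∧ P.2 < Q.2 := by
    simp only [cs, List.pairwise_cons, List.pairwise_append, List.pairwise_ofFn, List.mem_append,
      List.mem_ofFn, List.mem_singleton]
    refine ⟨?_, fun i j hij => ⟨hx hij, hy hij⟩, by simp, ?_⟩
    · rintro _ (⟨i, rfl⟩ | rfl)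
      exacts [⟨(hxN i).1, (hyN i).1⟩, by constructor <;> dsimp only <;> linarith]
    · rintro _ ⟨i, rfl⟩ _ rfl
      exact ⟨(hxN i).2, (hyN i).2⟩
  obtain ⟨f, hf, hfx⟩ := exists_memBPL_of_pairwise hn hφ (b := N) hgood hlt (by simp [cs])
  exact ⟨f, hf, fun i =>
    hfx (x i, y i) (.tail _ (List.mem_append_left _ (List.mem_ofFn.2 ⟨i, rfl⟩)))⟩

theorem stmt_3_general (n : ℕ) (hn : 2 ≤ n) (φ : ℝ → ZMod (n - 1)) (hφ : IsPhi n φ)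
    (k : ℕ) (x y : Fin k → ℝ)
    (hx : StrictMono x) (hy : StrictMono y)
    (hxΔ : ∀ i, x i ∈ zpows n ∧ φ (x i) = 0)
    (hyΔ : ∀ i, y i ∈ zpows n ∧ φ (y i) = 0) :
    ∃ f : ℝ → ℝ, MemBPL n f ∧ ∀ i, f (x i) = y i :=
  exists_memBPL_of_phi_eq (by omega) hφ hx hy (fun i => (hxΔ i).1) (fun i => (hyΔ i).1)
    fun i => (hxΔ i).2.trans (hyΔ i).2.symm

/-- `BPLₙ(ℝ)` acts order `k`-transitively on `Δₙ = ker φₙ` for every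
`k ≥ 1`: any increasing `k`-tuple in `Δₙ` can be carried to any other increasing
`k`-tuple in `Δₙ` by an element of `BPLₙ(ℝ)`. -/
theorem stmt_3 (n : ℕ) (hn : 2 ≤ n) (φ : ℝ → ZMod (n - 1)) (hφ : IsPhi n φ)
    (k : ℕ) (hk : 1 ≤ k) (x y : Fin k → ℝ)
    (hx : StrictMono x) (hy : StrictMono y)
    (hxΔ : ∀ i, x i ∈ zpows n ∧ φ (x i) = 0)
    (hyΔ : ∀ i, y i ∈ zpows n ∧ φ (y i) = 0) :
    ∃ f : ℝ → ℝ, MemBPL n f ∧ ∀ i, f (x i) = y i :=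
  stmt_3_general n hn φ hφ k x y hx hy hxΔ hyΔ
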